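/- arXiv:math/0211143 — 3 statements merged into one kernel-verified Lean document; each statement's English description precedes it below -/
import Mathlib

section
/- For the golden-ratio conjugate α = (√5 - 1)/2 and any ε > 0, there are only finitely many pairs of integers (p, q) with q ≥ 1 satisfying q·|q·α - p| < 1/√5 - ε. -/
/-!
Write `α = (√5 - 1)/2 = -ψ`. The norm form `p² + pq - q² = (p - qα)(p + qφ)` is a nonzero integer
for `q ≠ 0`, since `φ` and `ψ` are irrational, so `1 ≤ |qα - p| · |p + qφ|`. As `φ = α + √5`, the
second factor is at most `|qα - p| + √5 q`. If `q |qα - p| < 1/√5 - ε`, this forces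
`|qα - p|² > √5 ε`, while `q² |qα - p|² < 1/5`; hence `q² < 1 / (5√5 ε)`, which bounds `q`, and
then `p` lies within distance `1` of `qα`.
-/

open Real goldenRatio

theorem finite_setOf_denom_le_of_abs_sub_lt_one (α Q : ℝ) :
    {pq : ℤ × ℤ | 1 ≤ pq.2 ∧ (pq.2 : ℝ) ≤ Q ∧ |(pq.2 : ℝ) * α - pq.1| < 1}.Finite := by
  refine (Set.finite_Icc ((-⌈Q * |α| + 1⌉, 1) : ℤ × ℤ) (⌈Q * |α| + 1⌉, ⌈Q⌉)).subset ?_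
  rintro ⟨p, q⟩ ⟨hq, hqQ, hp⟩
  dsimp only at hq hqQ hp
  have hq0 : (0 : ℝ) ≤ q := by exact_mod_cast (by omega : (0 : ℤ) ≤ q)
  have hp_bound : |(p : ℝ)| ≤ Q * |α| + 1 :=
    calc |(p : ℝ)| ≤ |(q : ℝ) * α| + |(q : ℝ) * α - p| := by
          linarith [abs_sub_abs_le_abs_sub (p : ℝ) (q * α), abs_sub_comm (p : ℝ) (q * α)]
      _ ≤ Q * |α| + 1 := by
        rw [abs_mul, abs_of_nonneg hq0]
        gcongr
  have hp_int : |p| ≤ ⌈Q * |α| + 1⌉ := by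
    exact_mod_cast hp_bound.trans (Int.le_ceil _)
  have hq_int : q ≤ ⌈Q⌉ := by exact_mod_cast hqQ.trans (Int.le_ceil _)
  exact ⟨⟨(abs_le.mp hp_int).1, hq⟩, ⟨(abs_le.mp hp_int).2, hq_int⟩⟩

theorem Int.cast_sq_add_mul_sub_sq (p q : ℤ) :
    ((p ^ 2 + p * q - q ^ 2 : ℤ) : ℝ) = (p + q * ψ) * (p + q * φ) := by
  push_cast
  linear_combination (q : ℝ) ^ 2 / 4 * Real.sq_sqrt (show (0 : ℝ) ≤ 5 by norm_num)

theorem Int.sq_add_mul_sub_sq_ne_zero (p : ℤ) {q : ℤ} (hq : q ≠ 0) :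
    p ^ 2 + p * q - q ^ 2 ≠ 0 := by
  have hψ : (p : ℝ) + q * ψ ≠ 0 := by
    rw [add_comm, ← neg_neg (p : ℝ), ← sub_eq_add_neg, sub_ne_zero, ← Int.cast_neg]
    exact (goldenConj_irrational.intCast_mul hq).ne_int _
  have hφ : (p : ℝ) + q * φ ≠ 0 := by
    rw [add_comm, ← neg_neg (p : ℝ), ← sub_eq_add_neg, sub_ne_zero, ← Int.cast_neg]
    exact (goldenRatio_irrational.intCast_mul hq).ne_int _
  exact_mod_cast Int.cast_sq_add_mul_sub_sq p q ▸ mul_ne_zero hψ hφ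

theorem one_le_abs_sub_mul_abs_sub_add_sqrt_five (p : ℤ) {q : ℤ} (hq : 0 < q) :
    1 ≤ |(q : ℝ) * ((√5 - 1) / 2) - p| * (|(q : ℝ) * ((√5 - 1) / 2) - p| + √5 * q) := by
  calc (1 : ℝ) ≤ |((p ^ 2 + p * q - q ^ 2 : ℤ) : ℝ)| := by
        exact_mod_cast Int.one_le_abs (Int.sq_add_mul_sub_sq_ne_zero p hq.ne')
    _ = |(q : ℝ) * ((√5 - 1) / 2) - p| * |(p - q * ((√5 - 1) / 2)) + √5 * q| := by
        rw [Int.cast_sq_add_mul_sub_sq, ← abs_mul, ← abs_neg]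
        congr 1
        ring
    _ ≤ |(q : ℝ) * ((√5 - 1) / 2) - p| * (|(p : ℝ) - q * ((√5 - 1) / 2)| + |√5 * q|) := by
        gcongr
        exact abs_add_le _ _
    _ = |(q : ℝ) * ((√5 - 1) / 2) - p| * (|(q : ℝ) * ((√5 - 1) / 2) - p| + √5 * q) := by
        rw [abs_sub_comm (p : ℝ), abs_of_pos (by positivity : (0 : ℝ) < √5 * q)]

theorem denom_lt_of_mul_abs_sub_lt (p : ℤ) {q : ℤ} (hq : 1 ≤ q) {ε : ℝ} (hε : 0 < ε)
    (h : (q : ℝ) * |(q : ℝ) * ((√5 - 1) / 2) - p| < 1 / √5 - ε) :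
    (q : ℝ) < 1 / (5 * √5 * ε) := by
  set d := |(q : ℝ) * ((√5 - 1) / 2) - p|
  have hnorm := one_le_abs_sub_mul_abs_sub_add_sqrt_five p (q := q) (by omega)
  have hq1 : (1 : ℝ) ≤ q := by exact_mod_cast hq
  have hd : 0 ≤ d := abs_nonneg _
  have hs : 0 < √5 := by positivity
  have hs2 : √5 ^ 2 = 5 := Real.sq_sqrt (by norm_num)
  have hsqd : √5 * (q * d) < 1 - √5 * ε :=
    calc √5 * (q * d) < √5 * (1 / √5 - ε) := mul_lt_mul_of_pos_left h hs
      _ = 1 - √5 * ε := by field_simp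
  have hd2 : √5 * ε < d ^ 2 := by nlinarith
  have hqd2 : (q : ℝ) ^ 2 * d ^ 2 < 1 / 5 := by
    have hqd : 0 ≤ (q : ℝ) * d := by positivity
    have : ((q : ℝ) * d) ^ 2 < (1 / √5) ^ 2 := by
      gcongr
      linarith
    rwa [div_pow, hs2, one_pow, mul_pow] at this
  rw [lt_div_iff₀ (by positivity)]
  calc (q : ℝ) * (5 * √5 * ε) ≤ q ^ 2 * (5 * √5 * ε) := by gcongr; nlinarith
    _ = 5 * (q ^ 2 * (√5 * ε)) := by ring
    _ < 5 * (q ^ 2 * d ^ 2) := by gcongr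
    _ < 1 := by linarith

theorem stmt_1 (ε : ℝ) (hε : 0 < ε) :
    {pq : ℤ × ℤ | 1 ≤ pq.2 ∧
      (pq.2 : ℝ) * |(pq.2 : ℝ) * ((Real.sqrt 5 - 1) / 2) - pq.1| < 1 / Real.sqrt 5 - ε}.Finite := by
  refine (finite_setOf_denom_le_of_abs_sub_lt_one ((√5 - 1) / 2) (1 / (5 * √5 * ε))).subset ?_
  rintro ⟨p, q⟩ ⟨hq, h⟩
  dsimp only at hq h
  have hq1 : (1 : ℝ) ≤ q := by exact_mod_cast hq
  have hs : 1 / √5 < 1 := by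
    rw [div_lt_one (by positivity), Real.lt_sqrt] <;> norm_num
  have hd : |(q : ℝ) * ((√5 - 1) / 2) - p| < 1 :=
    calc _ ≤ (q : ℝ) * |(q : ℝ) * ((√5 - 1) / 2) - p| := le_mul_of_one_le_left (abs_nonneg _) hq1
      _ < 1 / √5 - ε := h
      _ < 1 := by linarith
  exact ⟨hq, (denom_lt_of_mul_abs_sub_lt p hq hε h).le, hd⟩
end

section
/- For every irrational α ∈ ℝ and every ε > 0, there exist infinitely many pairs of integers (p, q) with q ≥ 1 such that q·|q·α - p| < 1/√5 + ε. -/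
private lemma irr_mul_ne (α : ℝ) (hα : Irrational α) (a b : ℤ) (hb : b ≠ 0) :
    (b : ℝ) * α ≠ (a : ℝ) := by
  intro h
  have hbR : (b : ℝ) ≠ 0 := Int.cast_ne_zero.mpr hb
  have : α = (a : ℝ) / (b : ℝ) := by field_simp at h ⊢; linarith [h]
  exact (irrational_iff_ne_rational α).mp hα a b hb this

private lemma core_lemma (u v : ℝ) (hu : 0 < u) (hv : 0 < v)
    (h1 : u ^ 2 + v ^ 2 < Real.sqrt 5 * (u * v))
    (h2 : u ^ 2 + (u + v) ^ 2 < Real.sqrt 5 * (u * (u + v))) : False := by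
  have hs : Real.sqrt 5 ^ 2 = 5 := Real.sq_sqrt (by norm_num)
  nlinarith [sq_nonneg (2 * v + u - Real.sqrt 5 * u)]

private lemma trio (α : ℝ) (p q p' q' : ℤ) (hq : 1 ≤ q) (hq' : 1 ≤ q')
    (hdet : p' * q - p * q' = 1)
    (hl : (p : ℝ) < (q : ℝ) * α) (hr : (q' : ℝ) * α < (p' : ℝ)) :
    ∃ a b : ℤ, 1 ≤ b ∧ (b : ℝ) * |(b : ℝ) * α - (a : ℝ)| ≤ 1 / Real.sqrt 5 ∧
      |α - (a : ℝ) / (b : ℝ)| ≤ 1 / ((q : ℝ) * (q' : ℝ)) := by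
  obtain ⟨s, hs_def⟩ : ∃ x : ℝ, x = Real.sqrt 5 := ⟨_, rfl⟩
  rw [← hs_def]
  have hs : s ^ 2 = 5 := by rw [hs_def]; exact Real.sq_sqrt (by norm_num)
  have hspos : 0 < s := by rw [hs_def]; exact Real.sqrt_pos.mpr (by norm_num)
  have hQ : (1 : ℝ) ≤ (q : ℝ) := by exact_mod_cast hq
  have hQ' : (1 : ℝ) ≤ (q' : ℝ) := by exact_mod_cast hq'
  have hQpos : (0 : ℝ) < q := by linarith
  have hQ'pos : (0 : ℝ) < q' := by linarith
  have hdetR : (p' : ℝ) * q - (p : ℝ) * q' = 1 := by exact_mod_cast hdet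
  have hfl : (p : ℝ) / q < α := by rw [div_lt_iff₀ hQpos]; linarith
  have hfr : α < (p' : ℝ) / q' := by rw [lt_div_iff₀ hQ'pos]; linarith
  have hgap : (p' : ℝ) / q' - (p : ℝ) / q = 1 / ((q : ℝ) * q') := by
    rw [div_sub_div _ _ (ne_of_gt hQ'pos) (ne_of_gt hQpos)]
    rw [div_eq_div_iff (by positivity) (by positivity)]
    linear_combination ((q : ℝ) * (q' : ℝ)) * hdetR
  have bound : ∀ a b : ℤ, (0:ℝ) < b → (p : ℝ) / q ≤ (a : ℝ) / b →
      (a : ℝ) / b ≤ (p' : ℝ) / q' → |α - (a : ℝ) / b| ≤ 1 / ((q : ℝ) * q') := by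
    intro a b hbpos h1 h2
    rw [abs_le]
    constructor <;> linarith
  by_cases h1 : (q : ℝ) * |(q : ℝ) * α - (p : ℝ)| ≤ 1 / s
  · refine ⟨p, q, hq, h1, bound p q hQpos le_rfl ?_⟩
    have hz : (0:ℝ) < 1 / ((q:ℝ) * q') := by positivity
    linarith
  by_cases h2 : (q' : ℝ) * |(q' : ℝ) * α - (p' : ℝ)| ≤ 1 / s
  · refine ⟨p', q', hq', h2, bound p' q' hQ'pos ?_ le_rfl⟩
    have hz : (0:ℝ) < 1 / ((q:ℝ) * q') := by positivity
    linarith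
  by_cases h3 : ((q + q' : ℤ) : ℝ) * |((q + q' : ℤ) : ℝ) * α - ((p + p' : ℤ) : ℝ)| ≤ 1 / s
  · refine ⟨p + p', q + q', by omega, h3, ?_⟩
    have hm1 : (p : ℝ) / q ≤ ((p + p' : ℤ) : ℝ) / ((q + q' : ℤ) : ℝ) := by
      push_cast
      rw [div_le_div_iff₀ hQpos (by linarith)]
      nlinarith
    have hm2 : ((p + p' : ℤ) : ℝ) / ((q + q' : ℤ) : ℝ) ≤ (p' : ℝ) / q' := by
      push_cast
      rw [div_le_div_iff₀ (by linarith) hQ'pos]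
      nlinarith
    exact bound _ _ (by push_cast; linarith) hm1 hm2
  exfalso
  push_neg at h1 h2 h3
  obtain ⟨A, hA_def⟩ : ∃ x : ℝ, x = (q : ℝ) * α - p := ⟨_, rfl⟩
  obtain ⟨B, hB_def⟩ : ∃ x : ℝ, x = (p' : ℝ) - (q' : ℝ) * α := ⟨_, rfl⟩
  have hA : 0 < A := by rw [hA_def]; linarith
  have hB : 0 < B := by rw [hB_def]; linarith
  have key : (q' : ℝ) * A + (q : ℝ) * B = 1 := by
    rw [hA_def, hB_def]; linear_combination hdetR
  rw [abs_of_pos (by linarith : (0:ℝ) < (q:ℝ) * α - p), ← hA_def] at h1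
  have h2' : 1 / s < (q' : ℝ) * B := by
    rw [abs_of_neg (by linarith : (q':ℝ) * α - p' < 0)] at h2
    rw [hB_def]
    calc 1 / s < (q':ℝ) * -((q':ℝ) * α - (p':ℝ)) := h2
    _ = (q':ℝ) * ((p':ℝ) - (q':ℝ) * α) := by ring
  have hmed : ((q + q' : ℤ) : ℝ) * α - ((p + p' : ℤ) : ℝ) = A - B := by
    rw [hA_def, hB_def]; push_cast; ring
  rw [hmed] at h3
  have hQQ : ((q + q' : ℤ) : ℝ) = (q : ℝ) + (q' : ℝ) := by push_cast; ring
  rw [hQQ] at h3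
  have k1 : 1 < s * ((q : ℝ) * A) := by
    have := mul_lt_mul_of_pos_left h1 hspos
    rwa [mul_one_div, div_self (ne_of_gt hspos)] at this
  have k2 : 1 < s * ((q' : ℝ) * B) := by
    have := mul_lt_mul_of_pos_left h2' hspos
    rwa [mul_one_div, div_self (ne_of_gt hspos)] at this
  have ineq1 : (q : ℝ) ^ 2 + (q' : ℝ) ^ 2 < s * ((q : ℝ) * (q' : ℝ)) := by
    have e1 : (q' : ℝ)^2 * 1 < (q' : ℝ)^2 * (s * ((q:ℝ) * A)) :=
      mul_lt_mul_of_pos_left k1 (by positivity)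
    have e2 : (q : ℝ)^2 * 1 < (q : ℝ)^2 * (s * ((q':ℝ) * B)) :=
      mul_lt_mul_of_pos_left k2 (by positivity)
    have key2 : (q' : ℝ)^2 * (s * ((q:ℝ) * A)) + (q : ℝ)^2 * (s * ((q':ℝ) * B))
        = s * ((q:ℝ) * (q':ℝ)) := by
      linear_combination (s * (q:ℝ) * (q':ℝ)) * key
    linarith [e1, e2, key2]
  rcases le_or_gt B A with hAB | hAB
  · rw [abs_of_nonneg (by linarith : (0:ℝ) ≤ A - B)] at h3
    have k3 : 1 < s * ((((q:ℝ) + q')) * (A - B)) := by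
      have := mul_lt_mul_of_pos_left h3 hspos
      rwa [mul_one_div, div_self (ne_of_gt hspos)] at this
    have key' : (q' : ℝ) * (A - B) + ((q:ℝ) + q') * B = 1 := by linear_combination key
    have ineq2 : (q' : ℝ) ^ 2 + ((q':ℝ) + q) ^ 2 < s * ((q':ℝ) * ((q':ℝ) + q)) := by
      have e3 : (q' : ℝ)^2 * 1 < (q' : ℝ)^2 * (s * (((q:ℝ) + q') * (A - B))) :=
        mul_lt_mul_of_pos_left k3 (by positivity)
      have e4 : ((q:ℝ) + q')^2 * 1 < ((q:ℝ) + q')^2 * (s * ((q':ℝ) * B)) :=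
        mul_lt_mul_of_pos_left k2 (by positivity)
      have key2 : (q' : ℝ)^2 * (s * (((q:ℝ) + q') * (A - B)))
          + ((q:ℝ) + q')^2 * (s * ((q':ℝ) * B)) = s * ((q':ℝ) * ((q':ℝ) + q)) := by
        linear_combination (s * (q':ℝ) * ((q:ℝ) + q')) * key'
      linarith [e3, e4, key2]
    have c1 : (q' : ℝ)^2 + (q : ℝ)^2 < s * ((q':ℝ) * (q:ℝ)) := by
      have : s * ((q':ℝ) * (q:ℝ)) = s * ((q:ℝ) * (q':ℝ)) := by ring
      rw [this]; linarith [ineq1]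
    have hcore := core_lemma (q' : ℝ) (q : ℝ) hQ'pos hQpos
    rw [hs_def] at c1 ineq2
    exact hcore c1 ineq2
  · rw [abs_of_neg (by linarith : A - B < 0)] at h3
    have k3 : 1 < s * ((((q:ℝ) + q')) * (B - A)) := by
      have h := mul_lt_mul_of_pos_left h3 hspos
      rw [mul_one_div, div_self (ne_of_gt hspos)] at h
      linarith [h]
    have key' : (q : ℝ) * (B - A) + ((q:ℝ) + q') * A = 1 := by linear_combination key
    have ineq2 : (q : ℝ) ^ 2 + ((q:ℝ) + q') ^ 2 < s * ((q:ℝ) * ((q:ℝ) + q')) := by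
      have e3 : (q : ℝ)^2 * 1 < (q : ℝ)^2 * (s * (((q:ℝ) + q') * (B - A))) :=
        mul_lt_mul_of_pos_left k3 (by positivity)
      have e4 : ((q:ℝ) + q')^2 * 1 < ((q:ℝ) + q')^2 * (s * ((q:ℝ) * A)) :=
        mul_lt_mul_of_pos_left k1 (by positivity)
      have key2 : (q : ℝ)^2 * (s * (((q:ℝ) + q') * (B - A)))
          + ((q:ℝ) + q')^2 * (s * ((q:ℝ) * A)) = s * ((q:ℝ) * ((q:ℝ) + q')) := by
        linear_combination (s * (q:ℝ) * ((q:ℝ) + q')) * key'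
      linarith [e3, e4, key2]
    have hcore := core_lemma (q : ℝ) (q' : ℝ) hQpos hQ'pos
    rw [hs_def] at ineq1 ineq2
    exact hcore ineq1 ineq2

private lemma farey (α : ℝ) (hα : Irrational α) :
    ∀ n : ℕ, ∃ p q p' q' : ℤ, 1 ≤ q ∧ 1 ≤ q' ∧ p' * q - p * q' = 1 ∧
      (p : ℝ) < (q : ℝ) * α ∧ (q' : ℝ) * α < (p' : ℝ) ∧ (n : ℤ) < q + q' := by
  intro n
  induction n with
  | zero =>
    refine ⟨⌊α⌋, 1, ⌊α⌋ + 1, 1, le_refl 1, le_refl 1, by ring, ?_, ?_, by norm_num⟩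
    · push_cast
      rw [one_mul]
      exact lt_of_le_of_ne (Int.floor_le α) (fun h => (hα.ne_int ⌊α⌋ h.symm))
    · push_cast
      rw [one_mul]
      exact Int.lt_floor_add_one α
  | succ n ih =>
    obtain ⟨p, q, p', q', hq, hq', hdet, hl, hr, hsum⟩ := ih
    have hne : ((q + q' : ℤ) : ℝ) * α ≠ ((p + p' : ℤ) : ℝ) :=
      irr_mul_ne α hα _ _ (by omega)
    rcases lt_or_gt_of_ne hne with h | h
    · exact ⟨p, q, p + p', q + q', hq, by omega,
        by linear_combination hdet, hl, h, by push_cast; omega⟩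
    · exact ⟨p + p', q + q', p', q', by omega, hq',
        by linear_combination hdet, h, hr, by push_cast; omega⟩

theorem stmt_2 (α : ℝ) (hα : Irrational α) (ε : ℝ) (hε : 0 < ε) :
    {pq : ℤ × ℤ | 1 ≤ pq.2 ∧
      (pq.2 : ℝ) * |(pq.2 : ℝ) * α - pq.1| < 1 / Real.sqrt 5 + ε}.Infinite := by
  set S := {pq : ℤ × ℤ | 1 ≤ pq.2 ∧
      (pq.2 : ℝ) * |(pq.2 : ℝ) * α - pq.1| < 1 / Real.sqrt 5 + ε} with hS_def
  by_contra hfin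
  rw [Set.not_infinite] at hfin
  have hmem : ∀ a b : ℤ, 1 ≤ b → (b : ℝ) * |(b : ℝ) * α - (a : ℝ)| ≤ 1 / Real.sqrt 5 →
      (a, b) ∈ S := by
    intro a b hb h
    exact ⟨hb, lt_of_le_of_lt h (lt_add_of_pos_right _ hε)⟩
  have hne : S.Nonempty := by
    obtain ⟨p, q, p', q', hq, hq', hdet, hl, hr, _⟩ := farey α hα 0
    obtain ⟨a, b, hb, hh, _⟩ := trio α p q p' q' hq hq' hdet hl hr
    exact ⟨(a, b), hmem a b hb hh⟩
  obtain ⟨m, hmS, hmin⟩ := Set.exists_min_image S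
    (fun pq => |α - (pq.1 : ℝ) / (pq.2 : ℝ)|) hfin hne
  have hm2 : (0:ℝ) < (m.2 : ℝ) := by
    have := hmS.1
    exact_mod_cast lt_of_lt_of_le zero_lt_one (by exact_mod_cast this)
  have hδpos : 0 < |α - (m.1 : ℝ) / (m.2 : ℝ)| := by
    rw [abs_pos, sub_ne_zero]
    intro h
    apply irr_mul_ne α hα m.1 m.2 (by
      intro h0; rw [h0] at hm2; simp at hm2)
    rw [h]; field_simp
  set δ := |α - (m.1 : ℝ) / (m.2 : ℝ)| with hδ_def
  obtain ⟨n, hn⟩ := exists_nat_gt (2 / δ)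
  obtain ⟨p, q, p', q', hq, hq', hdet, hl, hr, hsum⟩ := farey α hα n
  obtain ⟨a, b, hb, hh, hclose⟩ := trio α p q p' q' hq hq' hdet hl hr
  have habS : (a, b) ∈ S := hmem a b hb hh
  have hQ : (1:ℝ) ≤ (q:ℝ) := by exact_mod_cast hq
  have hQ' : (1:ℝ) ≤ (q':ℝ) := by exact_mod_cast hq'
  have hsumR : (n : ℝ) < (q : ℝ) + (q' : ℝ) := by exact_mod_cast hsum
  have h2lt : 2 < (n : ℝ) * δ := by
    rw [div_lt_iff₀ hδpos] at hn; linarith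
  have hstep : (n : ℝ) < 2 * ((q : ℝ) * (q' : ℝ)) := by nlinarith
  have hlt : 1 / ((q : ℝ) * (q' : ℝ)) < δ := by
    rw [div_lt_iff₀ (by nlinarith : (0:ℝ) < (q:ℝ) * q')]
    nlinarith [mul_lt_mul_of_pos_left hstep hδpos]
  have hfinal : δ ≤ |α - (a : ℝ) / (b : ℝ)| := hmin (a, b) habS
  linarith [lt_of_le_of_lt hclose hlt]
end

section
/- Let θ = 2cos(2π/7), θ₁ = 2cos(4π/7), θ₂ = 2cos(6π/7), and define a = (θ₂² - θ²)(θ² - θ₁²), b = (θ₂² - θ²)(θ₁ - θ) + (θ₂ - θ)(θ₁² - θ²), c = (θ - θ₂)(θ₁ - θ). Then b² - 4·a·c = 49. -/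
/-!
With `θ = 2 cos (2π/7)`, the double- and triple-angle formulas give `θ₁ = θ² - 2` and
`θ₂ = θ³ - 3θ`, and `cos (8π/7) = cos (6π/7)` shows that `θ` is a root of
`(X - 2)(X³ + X² - 2X - 1)`, hence of the cubic. Factoring `a`, `b`, `c` through
`c = (θ - θ₂)(θ₁ - θ)` gives `b² - 4ac = ((θ - θ₂)(θ₁ - θ)(θ₁ - θ₂))²`, the discriminant of the
cubic `X³ + X² - 2X - 1` whose roots are `θ, θ₁, θ₂`; it equals `49`.
-/

open Real

theorem sq_sub_four_mul_eq_sq_vandermonde {R : Type*} [CommRing R] (x y z : R) :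
    ((z ^ 2 - x ^ 2) * (y - x) + (z - x) * (y ^ 2 - x ^ 2)) ^ 2
        - 4 * ((z ^ 2 - x ^ 2) * (x ^ 2 - y ^ 2)) * ((x - z) * (y - x))
      = ((x - z) * (y - x) * (y - z)) ^ 2 := by
  ring

theorem vandermonde_of_cubic_eq_zero {R : Type*} [CommRing R] {x : R}
    (hx : x ^ 3 + x ^ 2 - 2 * x - 1 = 0) :
    (x - (x ^ 3 - 3 * x)) * ((x ^ 2 - 2) - x) * ((x ^ 2 - 2) - (x ^ 3 - 3 * x)) = -7 := by
  linear_combination (x ^ 5 - 3 * x ^ 4 - 3 * x ^ 3 + 13 * x ^ 2 - 2 * x - 7) * hx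

theorem two_mul_cos_two_mul' (x : ℝ) : 2 * cos (2 * x) = (2 * cos x) ^ 2 - 2 := by
  rw [cos_two_mul]; ring

theorem two_mul_cos_three_mul (x : ℝ) :
    2 * cos (3 * x) = (2 * cos x) ^ 3 - 3 * (2 * cos x) := by
  rw [cos_three_mul]; ring

theorem two_mul_cos_two_pi_div_seven_cubic :
    let θ := 2 * cos (2 * π / 7)
    θ ^ 3 + θ ^ 2 - 2 * θ - 1 = 0 := by
  intro θ
  have hθ : θ ≠ 2 := by
    have : cos (2 * π / 7) < cos 0 :=
      cos_lt_cos_of_nonneg_of_le_pi le_rfl (by linarith [pi_pos]) (by positivity)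
    rw [cos_zero] at this
    exact (by linarith : θ < 2).ne
  have hcos : 2 * cos (2 * (2 * (2 * π / 7))) = 2 * cos (3 * (2 * π / 7)) := by
    rw [show 2 * (2 * (2 * π / 7)) = 2 * π - 3 * (2 * π / 7) by ring, cos_two_pi_sub]
  rw [two_mul_cos_two_mul', two_mul_cos_two_mul', two_mul_cos_three_mul] at hcos
  have hfactor : (θ - 2) * (θ ^ 3 + θ ^ 2 - 2 * θ - 1) = 0 := by linear_combination hcos
  exact (mul_eq_zero.mp hfactor).resolve_left (sub_ne_zero.mpr hθ)

theorem stmt_12 :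
    let θ := 2 * Real.cos (2 * Real.pi / 7)
    let θ₁ := 2 * Real.cos (4 * Real.pi / 7)
    let θ₂ := 2 * Real.cos (6 * Real.pi / 7)
    let a := (θ₂ ^ 2 - θ ^ 2) * (θ ^ 2 - θ₁ ^ 2)
    let b := (θ₂ ^ 2 - θ ^ 2) * (θ₁ - θ) + (θ₂ - θ) * (θ₁ ^ 2 - θ ^ 2)
    let c := (θ - θ₂) * (θ₁ - θ)
    b ^ 2 - 4 * a * c = 49 := by
  intro θ θ₁ θ₂ a b c
  have hθ₁ : θ₁ = θ ^ 2 - 2 := by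
    rw [← two_mul_cos_two_mul', show 2 * (2 * π / 7) = 4 * π / 7 by ring]
  have hθ₂ : θ₂ = θ ^ 3 - 3 * θ := by
    rw [← two_mul_cos_three_mul, show 3 * (2 * π / 7) = 6 * π / 7 by ring]
  calc b ^ 2 - 4 * a * c = ((θ - θ₂) * (θ₁ - θ) * (θ₁ - θ₂)) ^ 2 :=
        sq_sub_four_mul_eq_sq_vandermonde θ θ₁ θ₂
    _ = (-7) ^ 2 := by
        rw [hθ₁, hθ₂, vandermonde_of_cubic_eq_zero two_mul_cos_two_pi_div_seven_cubic]
    _ = 49 := by norm_num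
end
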